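/- For any small category B, the category Lens(B) of lenses over B has binary products: given lenses (f, φ) : A ⇌ B and (g, γ) : C ⇌ B, the pullback category A ×_B C carries a lens structure to B (with Get f∘π₀ = g∘π₁ and Put lifting (⟨a,c⟩, u : fa → b) to the pair (φ(a,u), γ(c,u))), and the projection lenses (π₀, 1×γ) : A×_B C ⇌ A and (π₁, φ×1) : A×_B C ⇌ C exhibit it as the product of (f,φ) and (g,γ) in Lens(B). -/

import Mathlib

open CategoryTheory

universe w v u v₁ u₁ v₂ u₂ v₃ u₃

section Helpers

/-- The hom-type of a category structure, given explicitly. -/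
def homOf {C : Type u₁} (cc : Category.{v₁} C) (x y : C) : Type v₁ :=
  @Quiver.Hom C cc.toCategoryStruct.toQuiver x y

/-- Object part of a functor, with explicit category structures. -/
def objOf {C : Type u₁} {D : Type u₂} (cc : Category.{v₁} C) (cd : Category.{v₂} D)
    (F : @Functor C cc D cd) : C → D := F.obj

/-- Morphism part of a functor, with explicit category structures. -/
def mapOf {C : Type u₁} {D : Type u₂} (cc : Category.{v₁} C) (cd : Category.{v₂} D)
    (F : @Functor C cc D cd) {x y : C} (u : homOf cc x y) :
    homOf cd (objOf cc cd F x) (objOf cc cd F y) := F.map u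

/-- Discrete opfibration: every morphism out of the image of an object has a unique
lift with that source. -/
def IsDiscreteOpfibration {X : Type u₁} {Y : Type u₂} (cx : Category.{v₁} X)
    (cy : Category.{v₂} Y) (F : @Functor X cx Y cy) : Prop :=
  ∀ (x : X) (y : Y) (u : homOf cy (objOf cx cy F x) y),
    ∃! t : (Σ x' : X, homOf cx x x'),
      objOf cx cy F t.1 = y ∧ HEq (mapOf cx cy F t.2) u

/-- Fully faithful, as a property. -/
def IsFullyFaithfulP {X : Type u₁} {Y : Type u₂} (cx : Category.{v₁} X)
    (cy : Category.{v₂} Y) (F : @Functor X cx Y cy) : Prop :=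
  ∀ (x x' : X) (u : homOf cy (objOf cx cy F x) (objOf cx cy F x')),
    ∃! w : homOf cx x x', mapOf cx cy F w = u

end Helpers
/-- An asymmetric delta lens `A ⇌ B`: a Get functor together with a Put operation
lifting morphisms of `B` out of `get.obj a` to morphisms of `A` out of `a`, satisfying
the PutGet, GetPut and PutPut laws. -/
structure Lens (A : Type u₁) (B : Type u₂) [Category.{v₁} A] [Category.{v₂} B] where
  get : A ⥤ B
  tgt : ∀ (a : A) {b : B}, (get.obj a ⟶ b) → A
  put : ∀ (a : A) {b : B} (u : get.obj a ⟶ b), a ⟶ tgt a u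
  obj_tgt : ∀ (a : A) {b : B} (u : get.obj a ⟶ b), get.obj (tgt a u) = b
  putget : ∀ (a : A) {b : B} (u : get.obj a ⟶ b), HEq (get.map (put a u)) u
  tgt_id : ∀ a : A, tgt a (𝟙 (get.obj a)) = a
  getput : ∀ a : A, HEq (put a (𝟙 (get.obj a))) (𝟙 a)
  tgt_comp : ∀ (a : A) {b c : B} (u : get.obj a ⟶ b) (v : b ⟶ c)
    (v' : get.obj (tgt a u) ⟶ c), HEq v' v → tgt a (u ≫ v) = tgt (tgt a u) v'
  putput : ∀ (a : A) {b c : B} (u : get.obj a ⟶ b) (v : b ⟶ c)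
    (v' : get.obj (tgt a u) ⟶ c), HEq v' v →
    HEq (put a (u ≫ v)) (put a u ≫ put (tgt a u) v')
section Pullback

variable {A B C : Type u} [Category.{v} A] [Category.{v} B] [Category.{v} C]

/-- The pullback of two functors in `Cat`: objects are pairs whose images agree. -/
def PB (f : A ⥤ B) (g : C ⥤ B) : Type u := { p : A × C // f.obj p.1 = g.obj p.2 }

/-- Morphisms in the pullback category: pairs of morphisms whose images agree. -/
@[ext] structure PBHom {f : A ⥤ B} {g : C ⥤ B} (x y : PB f g) where
  m1 : x.1.1 ⟶ y.1.1
  m2 : x.1.2 ⟶ y.1.2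
  w : f.map m1 ≫ eqToHom y.2 = eqToHom x.2 ≫ g.map m2

instance PB.category (f : A ⥤ B) (g : C ⥤ B) : Category.{v} (PB f g) where
  Hom x y := PBHom x y
  id x := ⟨𝟙 _, 𝟙 _, by simp⟩
  comp m n := ⟨m.m1 ≫ n.m1, m.m2 ≫ n.m2, by
    rw [Functor.map_comp, Functor.map_comp, Category.assoc, n.w, ← Category.assoc,
      m.w, Category.assoc]⟩
  id_comp m := by apply PBHom.ext <;> simp
  comp_id m := by apply PBHom.ext <;> simp
  assoc m n o := by apply PBHom.ext <;> simp

/-- The first projection of the pullback. -/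
def PB.proj₁ (f : A ⥤ B) (g : C ⥤ B) : PB f g ⥤ A where
  obj x := x.1.1
  map m := m.m1

/-- The second projection of the pullback. -/
def PB.proj₂ (f : A ⥤ B) (g : C ⥤ B) : PB f g ⥤ C where
  obj x := x.1.2
  map m := m.m2

end Pullback

section LensOver

variable {X Y B : Type u} [Category.{v} X] [Category.{v} Y] [Category.{v} B]

/-- A morphism in the category `Lens(B)` of lenses over a base `B`: a functor between
the domains commuting with the Gets and preserving the Puts. -/
structure LensHomOver (l1 : Lens X B) (l2 : Lens Y B) where
  h : X ⥤ Y
  comm : h ⋙ l2.get = l1.get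
  tgt_comm : ∀ (x : X) {b : B} (u : l1.get.obj x ⟶ b)
    (u' : l2.get.obj (h.obj x) ⟶ b), HEq u' u →
    h.obj (l1.tgt x u) = l2.tgt (h.obj x) u'
  put_comm : ∀ (x : X) {b : B} (u : l1.get.obj x ⟶ b)
    (u' : l2.get.obj (h.obj x) ⟶ b), HEq u' u →
    HEq (h.map (l1.put x u)) (l2.put (h.obj x) u')

/-! A Put in the pullback is the pair of Puts in the two components: both lie over the same
morphism of `B`, so the pair is again a morphism of the pullback, and the lens laws hold
componentwise. Two lens morphisms into the factors induce a functor into the pullback by its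
universal property in `Cat`; it preserves Puts because each component does, and its uniqueness
is that of the pullback. -/

namespace PB

variable {A B C Q : Type u} [Category.{v} A] [Category.{v} B] [Category.{v} C] [Category.{v} Q]
  {f : A ⥤ B} {g : C ⥤ B}

lemma ext {x y : PB f g} (h₁ : x.1.1 = y.1.1) (h₂ : x.1.2 = y.1.2) : x = y :=
  Subtype.ext (Prod.ext h₁ h₂)

lemma w_of_heq {a a' : A} {c c' : C} (hx : f.obj a = g.obj c) (hy : f.obj a' = g.obj c')
    {m₁ : a ⟶ a'} {m₂ : c ⟶ c'} {b b' : B} {u : b ⟶ b'}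
    (h₁ : f.map m₁ ≍ u) (h₂ : g.map m₂ ≍ u) :
    f.map m₁ ≫ eqToHom hy = eqToHom hx ≫ g.map m₂ :=
  eq_of_heq <| (comp_eqToHom_heq _ _).trans <| h₁.trans <|
    h₂.symm.trans (eqToHom_comp_heq _ _).symm

lemma hom_hext {x x' y y' : PB f g} (hx : x = x') (hy : y = y') {m : x ⟶ y} {m' : x' ⟶ y'}
    (h₁ : m.m1 ≍ m'.m1) (h₂ : m.m2 ≍ m'.m2) : m ≍ m' := by
  subst hx hy
  exact heq_of_eq (PBHom.ext (eq_of_heq h₁) (eq_of_heq h₂))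

variable (f g)

lemma proj_comm : proj₁ f g ⋙ f = proj₂ f g ⋙ g :=
  Functor.hext (fun x => x.property) fun _ _ m =>
    (comp_eqToHom_heq _ _).symm.trans ((heq_of_eq m.w).trans (eqToHom_comp_heq _ _))

def lift (F : Q ⥤ A) (G : Q ⥤ C) (h : F ⋙ f = G ⋙ g) : Q ⥤ PB f g where
  obj q := ⟨(F.obj q, G.obj q), Functor.congr_obj h q⟩
  map m := ⟨F.map m, G.map m, w_of_heq _ _ (Functor.hcongr_hom h m) HEq.rfl⟩
  map_id q := PBHom.ext (F.map_id q) (G.map_id q)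
  map_comp m n := PBHom.ext (F.map_comp m n) (G.map_comp m n)

variable {f g}

lemma functor_ext {H H' : Q ⥤ PB f g} (h₁ : H ⋙ proj₁ f g = H' ⋙ proj₁ f g)
    (h₂ : H ⋙ proj₂ f g = H' ⋙ proj₂ f g) : H = H' :=
  Functor.hext (fun q => ext (Functor.congr_obj h₁ q) (Functor.congr_obj h₂ q))
    fun q q' m => hom_hext (ext (Functor.congr_obj h₁ q) (Functor.congr_obj h₂ q))
      (ext (Functor.congr_obj h₁ q') (Functor.congr_obj h₂ q'))
      (Functor.hcongr_hom h₁ m) (Functor.hcongr_hom h₂ m)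

end PB

namespace Lens

variable {A : Type u₁} {B : Type u₂} [Category.{v₁} A] [Category.{v₂} B]
  (l : Lens A B) (a : A)

lemma tgt_hcongr {b b' : B} (hb : b = b') {u : l.get.obj a ⟶ b} {u' : l.get.obj a ⟶ b'}
    (hu : u ≍ u') : l.tgt a u = l.tgt a u' := by
  subst hb; rw [eq_of_heq hu]

lemma put_hcongr {b b' : B} (hb : b = b') {u : l.get.obj a ⟶ b} {u' : l.get.obj a ⟶ b'}
    (hu : u ≍ u') : l.put a u ≍ l.put a u' := by
  subst hb; rw [eq_of_heq hu]

lemma tgt_eqToHom {b : B} (h : l.get.obj a = b) : l.tgt a (eqToHom h) = a := by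
  subst h; exact l.tgt_id a

lemma put_eqToHom {b : B} (h : l.get.obj a = b) : l.put a (eqToHom h) ≍ 𝟙 a := by
  subst h; exact l.getput a

lemma tgt_comp_assoc {b c d : B} (u : l.get.obj a ⟶ b) (v : b ⟶ c) (w : c ⟶ d)
    (w' : l.get.obj (l.tgt a (u ≫ v)) ⟶ d) (hw : w' ≍ w) :
    l.tgt a (u ≫ v ≫ w) = l.tgt (l.tgt a (u ≫ v)) w' := by
  rw [← Category.assoc]; exact l.tgt_comp a _ w w' hw

lemma put_comp_assoc {b c d : B} (u : l.get.obj a ⟶ b) (v : b ⟶ c) (w : c ⟶ d)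
    (w' : l.get.obj (l.tgt a (u ≫ v)) ⟶ d) (hw : w' ≍ w) :
    l.put a (u ≫ v ≫ w) ≍ l.put a (u ≫ v) ≫ l.put (l.tgt a (u ≫ v)) w' := by
  rw [← Category.assoc]; exact l.putput a _ w w' hw

end Lens

lemma LensHomOver.ext {X Y B : Type u} [Category.{v} X] [Category.{v} Y] [Category.{v} B]
    {l₁ : Lens X B} {l₂ : Lens Y B} {k k' : LensHomOver l₁ l₂} (h : k.h = k'.h) :
    k = k' := by
  cases k; cases k'; cases h; rfl

section ProdLens

variable {A B C : Type u} [Category.{v} A] [Category.{v} B] [Category.{v} C]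

def prodLens (l1 : Lens A B) (l2 : Lens C B) : Lens (PB l1.get l2.get) B where
  get := PB.proj₁ l1.get l2.get ⋙ l1.get
  tgt x _ u := ⟨(l1.tgt x.1.1 u, l2.tgt x.1.2 (eqToHom x.2.symm ≫ u)),
    (l1.obj_tgt x.1.1 u).trans (l2.obj_tgt x.1.2 _).symm⟩
  put x _ u := ⟨l1.put x.1.1 u, l2.put x.1.2 (eqToHom x.2.symm ≫ u),
    PB.w_of_heq _ _ (l1.putget x.1.1 u) ((l2.putget x.1.2 _).trans (eqToHom_comp_heq u _))⟩
  obj_tgt x _ u := l1.obj_tgt x.1.1 u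
  putget x _ u := l1.putget x.1.1 u
  tgt_id x := PB.ext (l1.tgt_id x.1.1)
    ((congrArg (l2.tgt x.1.2) (Category.comp_id _)).trans (l2.tgt_eqToHom x.1.2 x.2.symm))
  getput x := PB.hom_hext rfl
    (PB.ext (l1.tgt_id x.1.1)
      ((congrArg (l2.tgt x.1.2) (Category.comp_id _)).trans (l2.tgt_eqToHom x.1.2 x.2.symm)))
    (l1.getput x.1.1)
    ((congr_arg_heq (l2.put x.1.2) (Category.comp_id _)).trans (l2.put_eqToHom x.1.2 x.2.symm))
  tgt_comp x _ _ u v v' hv := PB.ext (l1.tgt_comp x.1.1 u v v' hv)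
    (l2.tgt_comp_assoc x.1.2 _ u v _ ((eqToHom_comp_heq v' _).trans hv))
  putput x _ _ u v v' hv := PB.hom_hext rfl
    (PB.ext (l1.tgt_comp x.1.1 u v v' hv)
      (l2.tgt_comp_assoc x.1.2 _ u v _ ((eqToHom_comp_heq v' _).trans hv)))
    (l1.putput x.1.1 u v v' hv)
    (l2.put_comp_assoc x.1.2 _ u v _ ((eqToHom_comp_heq v' _).trans hv))

variable (l1 : Lens A B) (l2 : Lens C B)

def prodLens.fst : LensHomOver (prodLens l1 l2) l1 where
  h := PB.proj₁ l1.get l2.get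
  comm := rfl
  tgt_comm _ _ _ _ hu := by obtain rfl := eq_of_heq hu; rfl
  put_comm _ _ _ _ hu := by obtain rfl := eq_of_heq hu; rfl

def prodLens.snd : LensHomOver (prodLens l1 l2) l2 where
  h := PB.proj₂ l1.get l2.get
  comm := (PB.proj_comm l1.get l2.get).symm
  tgt_comm x _ u _ hu := l2.tgt_hcongr x.1.2 rfl ((eqToHom_comp_heq u _).trans hu.symm)
  put_comm x _ u _ hu := l2.put_hcongr x.1.2 rfl ((eqToHom_comp_heq u _).trans hu.symm)

variable {l1 l2} {Q : Type u} [Category.{v} Q] {lq : Lens Q B}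

def prodLens.lift (q1 : LensHomOver lq l1) (q2 : LensHomOver lq l2) :
    LensHomOver lq (prodLens l1 l2) where
  h := PB.lift l1.get l2.get q1.h q2.h (q1.comm.trans q2.comm.symm)
  comm := q1.comm
  tgt_comm x _ u u' hu := PB.ext (q1.tgt_comm x u u' hu)
    (q2.tgt_comm x u _ ((eqToHom_comp_heq u' _).trans hu))
  put_comm x _ u u' hu := PB.hom_hext rfl
    (PB.ext (q1.tgt_comm x u u' hu) (q2.tgt_comm x u _ ((eqToHom_comp_heq u' _).trans hu)))
    (q1.put_comm x u u' hu) (q2.put_comm x u _ ((eqToHom_comp_heq u' _).trans hu))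

lemma prodLens.hom_ext {k k' : LensHomOver lq (prodLens l1 l2)}
    (h₁ : k.h ⋙ (prodLens.fst l1 l2).h = k'.h ⋙ (prodLens.fst l1 l2).h)
    (h₂ : k.h ⋙ (prodLens.snd l1 l2).h = k'.h ⋙ (prodLens.snd l1 l2).h) : k = k' :=
  LensHomOver.ext (PB.functor_ext h₁ h₂)

end ProdLens

/-- For any small category `B`, the category `Lens(B)` of lenses over `B` has binary
products: the pullback category `A ×_B C` carries a lens to `B` whose Put lifts
`(⟨a, c⟩, u : fa ⟶ b)` to the pair `(φ(a,u), γ(c,u))`, and the projection lenses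
exhibit it as the product of `(f, φ)` and `(g, γ)` in `Lens(B)`. -/
theorem lensOver_products {A B C : Type u} [Category.{v} A] [Category.{v} B]
    [Category.{v} C] (l1 : Lens A B) (l2 : Lens C B) :
    ∃ (lp : Lens (PB l1.get l2.get) B) (p1 : LensHomOver lp l1) (p2 : LensHomOver lp l2),
      (∀ x : PB l1.get l2.get, lp.get.obj x = l1.get.obj x.1.1) ∧
      (∀ x : PB l1.get l2.get, p1.h.obj x = x.1.1) ∧
      (∀ x : PB l1.get l2.get, p2.h.obj x = x.1.2) ∧
      (∀ (x : PB l1.get l2.get) (b : B) (u : lp.get.obj x ⟶ b)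
        (u1 : l1.get.obj x.1.1 ⟶ b) (u2 : l2.get.obj x.1.2 ⟶ b), HEq u1 u → HEq u2 u →
        (lp.tgt x u).1.1 = l1.tgt x.1.1 u1 ∧ (lp.tgt x u).1.2 = l2.tgt x.1.2 u2 ∧
        HEq (PBHom.m1 (lp.put x u)) (l1.put x.1.1 u1) ∧
        HEq (PBHom.m2 (lp.put x u)) (l2.put x.1.2 u2)) ∧
      ∀ (Q : Type u) [Category.{v} Q] (lq : Lens Q B)
        (q1 : LensHomOver lq l1) (q2 : LensHomOver lq l2),
        ∃! k : LensHomOver lq lp, k.h ⋙ p1.h = q1.h ∧ k.h ⋙ p2.h = q2.h := by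
  refine ⟨prodLens l1 l2, prodLens.fst l1 l2, prodLens.snd l1 l2, fun _ => rfl, fun _ => rfl,
    fun _ => rfl, fun x _ u u1 u2 hu1 hu2 => ?_, fun Q _ lq q1 q2 => ?_⟩
  · exact ⟨(prodLens.fst l1 l2).tgt_comm x u u1 hu1, (prodLens.snd l1 l2).tgt_comm x u u2 hu2,
      (prodLens.fst l1 l2).put_comm x u u1 hu1, (prodLens.snd l1 l2).put_comm x u u2 hu2⟩
  · exact ⟨prodLens.lift q1 q2, ⟨rfl, rfl⟩, fun k hk => prodLens.hom_ext hk.1 hk.2⟩
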